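/- For every x ≥ 0, log(1 + x) = ∫₀^∞ (e^{−z} − e^{−z(1+x)})/z dz, where log is the natural logarithm. -/

import Mathlib

/-!
Frullani's trick: for `0 < a ≤ b` the integrand is itself an integral,
`(e^{-az} - e^{-bz}) / z = ∫_a^b e^{-zt} dt`, and the kernel `e^{-zt}` is dominated on
`(0, ∞) × (a, b]` by the integrable `e^{-az}`. Fubini therefore lets us integrate in `z` first,
which gives `∫_a^b dt / t = log (b / a)`.
-/

open Real MeasureTheory Set

lemma intervalIntegral_exp_neg_mul {z : ℝ} (hz : z ≠ 0) (a b : ℝ) :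
    ∫ t in a..b, exp (-z * t) = (exp (-z * a) - exp (-z * b)) / z := by
  rw [intervalIntegral.integral_comp_mul_left exp (neg_ne_zero.2 hz), integral_exp,
    smul_eq_mul]
  field_simp
  ring

lemma integral_Ioi_exp_neg_mul {t : ℝ} (ht : 0 < t) :
    ∫ z in Ioi (0 : ℝ), exp (-z * t) = 1 / t := by
  have h := integral_exp_mul_Ioi (neg_neg_of_pos ht) 0
  rw [mul_zero, exp_zero, div_neg, neg_div, neg_neg] at h
  convert h using 4 with z
  ring

lemma integrable_exp_neg_mul_prod {a : ℝ} (ha : 0 < a) (b : ℝ) :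
    Integrable (fun p : ℝ × ℝ => exp (-p.1 * p.2))
      ((volume.restrict (Ioi 0)).prod (volume.restrict (Ioc a b))) := by
  have hdom : Integrable (fun p : ℝ × ℝ => exp (-a * p.1) * 1)
      ((volume.restrict (Ioi 0)).prod (volume.restrict (Ioc a b))) :=
    (integrableOn_exp_mul_Ioi (neg_neg_of_pos ha) 0).mul_prod (integrable_const 1)
  refine hdom.mono' (by fun_prop) ?_
  rw [Measure.prod_restrict]
  refine ae_restrict_of_forall_mem (measurableSet_Ioi.prod measurableSet_Ioc) ?_
  rintro ⟨z, t⟩ ⟨hz, ht⟩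
  rw [norm_of_nonneg (exp_pos _).le, mul_one, exp_le_exp]
  nlinarith [hz.out, ht.1]

lemma integral_exp_neg_mul_sub_div_of_le {a b : ℝ} (ha : 0 < a) (hab : a ≤ b) :
    ∫ z in Ioi (0 : ℝ), (exp (-z * a) - exp (-z * b)) / z = log (b / a) := by
  have hb : 0 < b := ha.trans_le hab
  calc ∫ z in Ioi (0 : ℝ), (exp (-z * a) - exp (-z * b)) / z
      = ∫ z in Ioi (0 : ℝ), ∫ t in Ioc a b, exp (-z * t) := by
        refine setIntegral_congr_fun measurableSet_Ioi fun z hz => ?_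
        rw [← intervalIntegral.integral_of_le hab,
          intervalIntegral_exp_neg_mul (ne_of_gt (mem_Ioi.1 hz))]
    _ = ∫ t in Ioc a b, ∫ z in Ioi (0 : ℝ), exp (-z * t) :=
        integral_integral_swap (integrable_exp_neg_mul_prod ha b)
    _ = ∫ t in Ioc a b, 1 / t :=
        setIntegral_congr_fun measurableSet_Ioc fun t ht =>
          integral_Ioi_exp_neg_mul (ha.trans ht.1)
    _ = log (b / a) := by
        rw [← intervalIntegral.integral_of_le hab, integral_one_div_of_pos ha hb]

theorem integral_exp_neg_mul_sub_div {a b : ℝ} (ha : 0 < a) (hb : 0 < b) :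
    ∫ z in Ioi (0 : ℝ), (exp (-z * a) - exp (-z * b)) / z = log (b / a) := by
  rcases le_total a b with hab | hba
  · exact integral_exp_neg_mul_sub_div_of_le ha hab
  · have hswap : ∀ z : ℝ, (exp (-z * a) - exp (-z * b)) / z
        = -((exp (-z * b) - exp (-z * a)) / z) := fun z => by ring
    simp_rw [hswap, integral_neg, integral_exp_neg_mul_sub_div_of_le hb hba, ← log_inv,
      inv_div]

theorem stmt_10 (x : ℝ) (hx : 0 ≤ x) :
    Real.log (1 + x)
      = ∫ z in Set.Ioi (0:ℝ), (Real.exp (-z) - Real.exp (-z * (1 + x))) / z := by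
  simpa only [mul_one, div_one] using
    (integral_exp_neg_mul_sub_div one_pos (by linarith : (0 : ℝ) < 1 + x)).symm
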